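/- Let a > −4, b > 0, and Γ₀, Υ₀ be C¹ with Γ₀(y_⋆) > 0, Υ₀(y_⋆) > 0 where y_⋆ = (a+4)/(a+6), v_⋆ = 2Υ₀(y_⋆)/(a+6), and assume (bΥ₀(y_⋆) − y_⋆ Υ₀'(y_⋆))(1−y_⋆) + y_⋆Υ₀(y_⋆) > 0. Then (y_⋆, v_⋆) is a fixed point of the planar system dy/dξ = (Υ₀(y)(1−y) − v)y, dv/dξ = (b(Υ₀(y)(1−y) − v) + Γ₀(y)(2 − (6+a)(1−y)))v, its Jacobian has determinant 2 y_⋆ Γ₀(y_⋆) Υ₀(y_⋆) > 0 and trace −((bΥ₀(y_⋆) − y_⋆Υ₀'(y_⋆))(1−y_⋆) + y_⋆Υ₀(y_⋆)) < 0; hence it is a hyperbolic sink (both eigenvalues have negative real part). -/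

import Mathlib

open Matrix

/-- First component of the planar vector field. -/
noncomputable def planarF1 (Υ₀ : ℝ → ℝ) (y v : ℝ) : ℝ :=
  (Υ₀ y * (1 - y) - v) * y

/-- Second component of the planar vector field. -/
noncomputable def planarF2 (Υ₀ Γ₀ : ℝ → ℝ) (a b : ℝ) (y v : ℝ) : ℝ :=
  (b * (Υ₀ y * (1 - y) - v) + Γ₀ y * (2 - (6 + a) * (1 - y))) * v

/-! A point is a sink once its Jacobian has negative trace and positive determinant: writing a
root of `z² - T z + D` as `x + i w`, the imaginary part `w (2x - T)` forces either `x = T / 2 < 0`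
or a real root, and a real root `x ≥ 0` would make `x² - T x + D` positive. At the interior fixed
point both factors `Υ₀ y (1 - y) - v` and `2 - (6 + a)(1 - y)` vanish, which collapses the
Jacobian to a matrix whose determinant and trace can be read off directly. -/

theorem Complex.re_neg_of_sq_sub_mul_add_eq_zero {T D : ℝ} (hT : T < 0) (hD : 0 < D) {z : ℂ}
    (hz : z ^ 2 - (T : ℂ) * z + (D : ℂ) = 0) : z.re < 0 := by
  have hre : z.re ^ 2 - z.im ^ 2 - T * z.re + D = 0 := by
    simpa [pow_two] using congrArg Complex.re hz
  have him : z.im * (2 * z.re - T) = 0 := by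
    linear_combination (by simpa [pow_two] using congrArg Complex.im hz : _ = (0 : ℝ))
  by_contra! hx
  have hw : z.im = 0 := (mul_eq_zero.mp him).resolve_right (by linarith)
  nlinarith [sq_nonneg z.re]

section Jacobian

variable {Υ₀ Γ₀ : ℝ → ℝ} {a b y v : ℝ}

theorem hasDerivAt_planarF1_fst (hΥ : DifferentiableAt ℝ Υ₀ y) :
    HasDerivAt (fun t => planarF1 Υ₀ t v)
      ((deriv Υ₀ y * (1 - y) - Υ₀ y) * y + (Υ₀ y * (1 - y) - v)) y := by
  have h : HasDerivAt (fun t => (Υ₀ t * (1 - t) - v) * t) _ y :=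
    ((hΥ.hasDerivAt.mul ((hasDerivAt_id' y).const_sub 1)).sub_const v).mul (hasDerivAt_id' y)
  exact h.congr_deriv (by simp only [Pi.mul_apply]; ring)

theorem hasDerivAt_planarF1_snd : HasDerivAt (fun w => planarF1 Υ₀ y w) (-y) v := by
  unfold planarF1
  simpa using ((hasDerivAt_id v).const_sub (Υ₀ y * (1 - y))).mul_const y

theorem hasDerivAt_planarF2_fst (hΥ : DifferentiableAt ℝ Υ₀ y)
    (hΓ : DifferentiableAt ℝ Γ₀ y) :
    HasDerivAt (fun t => planarF2 Υ₀ Γ₀ a b t v)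
      ((b * (deriv Υ₀ y * (1 - y) - Υ₀ y)
        + (deriv Γ₀ y * (2 - (6 + a) * (1 - y)) + Γ₀ y * (6 + a))) * v) y := by
  have hone := (hasDerivAt_id' y).const_sub 1
  have h : HasDerivAt
      (fun t => (b * (Υ₀ t * (1 - t) - v) + Γ₀ t * (2 - (6 + a) * (1 - t))) * v) _ y :=
    ((((hΥ.hasDerivAt.mul hone).sub_const v).const_mul b).add
      (hΓ.hasDerivAt.mul ((hone.const_mul (6 + a)).const_sub 2))).mul_const v
  exact h.congr_deriv (by ring)

theorem hasDerivAt_planarF2_snd :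
    HasDerivAt (fun w => planarF2 Υ₀ Γ₀ a b y w)
      (-b * v + (b * (Υ₀ y * (1 - y) - v) + Γ₀ y * (2 - (6 + a) * (1 - y)))) v := by
  have h : HasDerivAt
      (fun w => (b * (Υ₀ y * (1 - y) - w) + Γ₀ y * (2 - (6 + a) * (1 - y))) * w) _ v :=
    ((((hasDerivAt_id' v).const_sub (Υ₀ y * (1 - y))).const_mul b).add_const
      (Γ₀ y * (2 - (6 + a) * (1 - y)))).mul (hasDerivAt_id' v)
  exact h.congr_deriv (by ring)

theorem planarF1_eq_zero_of_fixed (hE : Υ₀ y * (1 - y) = v) : planarF1 Υ₀ y v = 0 := by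
  simp [planarF1, hE]

theorem planarF2_eq_zero_of_fixed (hE : Υ₀ y * (1 - y) = v) (hC : (6 + a) * (1 - y) = 2) :
    planarF2 Υ₀ Γ₀ a b y v = 0 := by
  simp [planarF2, hE, hC]

theorem jacobian_eq_of_fixed (hE : Υ₀ y * (1 - y) = v) (hC : (6 + a) * (1 - y) = 2)
    (hΥ : DifferentiableAt ℝ Υ₀ y) (hΓ : DifferentiableAt ℝ Γ₀ y) :
    !![deriv (fun t => planarF1 Υ₀ t v) y, deriv (fun w => planarF1 Υ₀ y w) v;
       deriv (fun t => planarF2 Υ₀ Γ₀ a b t v) y, deriv (fun w => planarF2 Υ₀ Γ₀ a b y w) v] =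
    !![(deriv Υ₀ y * (1 - y) - Υ₀ y) * y, -y;
       (b * (deriv Υ₀ y * (1 - y) - Υ₀ y) + Γ₀ y * (6 + a)) * v, -b * v] := by
  rw [(hasDerivAt_planarF1_fst hΥ).deriv, hasDerivAt_planarF1_snd.deriv,
    (hasDerivAt_planarF2_fst hΥ hΓ).deriv, hasDerivAt_planarF2_snd.deriv, hE, hC]
  simp

end Jacobian

theorem interior_fixed_point_is_sink_general
    (Υ₀ Γ₀ : ℝ → ℝ) (a b : ℝ) (ha : -4 < a)
    (hΥ : ContDiff ℝ 1 Υ₀) (hΓ : ContDiff ℝ 1 Γ₀)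
    (ystar vstar : ℝ) (hy : ystar = (a + 4) / (a + 6))
    (hv : vstar = 2 * Υ₀ ystar / (a + 6))
    (hΓpos : 0 < Γ₀ ystar) (hΥpos : 0 < Υ₀ ystar)
    (hdulac : 0 < (b * Υ₀ ystar - ystar * deriv Υ₀ ystar) * (1 - ystar)
        + ystar * Υ₀ ystar) :
    planarF1 Υ₀ ystar vstar = 0 ∧
    planarF2 Υ₀ Γ₀ a b ystar vstar = 0 ∧
    ∀ J : Matrix (Fin 2) (Fin 2) ℝ,
      J = !![deriv (fun t => planarF1 Υ₀ t vstar) ystar,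
             deriv (fun w => planarF1 Υ₀ ystar w) vstar;
             deriv (fun t => planarF2 Υ₀ Γ₀ a b t vstar) ystar,
             deriv (fun w => planarF2 Υ₀ Γ₀ a b ystar w) vstar] →
      J.det = 2 * ystar * Γ₀ ystar * Υ₀ ystar ∧ 0 < J.det ∧
      J.trace = -((b * Υ₀ ystar - ystar * deriv Υ₀ ystar) * (1 - ystar)
          + ystar * Υ₀ ystar) ∧ J.trace < 0 ∧
      ∀ z : ℂ, z ^ 2 - (J.trace : ℂ) * z + (J.det : ℂ) = 0 → z.re < 0 := by
  have ha6 : a + 6 ≠ 0 := by linarith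
  have hC : (6 + a) * (1 - ystar) = 2 := by
    rw [hy]
    field_simp
    ring
  have hE : Υ₀ ystar * (1 - ystar) = vstar := by
    rw [hv, eq_div_iff ha6]
    linear_combination Υ₀ ystar * hC
  have hy_pos : 0 < ystar := hy ▸ div_pos (by linarith) (by linarith)
  refine ⟨planarF1_eq_zero_of_fixed hE, planarF2_eq_zero_of_fixed hE hC, fun J hJ => ?_⟩
  rw [jacobian_eq_of_fixed hE hC (hΥ.differentiable one_ne_zero ystar)
    (hΓ.differentiable one_ne_zero ystar)] at hJ
  have hdet : J.det = 2 * ystar * Γ₀ ystar * Υ₀ ystar := by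
    rw [hJ, det_fin_two_of, ← hE]
    linear_combination ystar * Γ₀ ystar * Υ₀ ystar * hC
  have htr : J.trace = -((b * Υ₀ ystar - ystar * deriv Υ₀ ystar) * (1 - ystar)
      + ystar * Υ₀ ystar) := by
    rw [hJ, trace_fin_two_of, ← hE]
    ring
  have hdet_pos : 0 < J.det := by rw [hdet]; positivity
  have htr_neg : J.trace < 0 := by rw [htr]; linarith
  exact ⟨hdet, hdet_pos, htr, htr_neg,
    fun z hz => Complex.re_neg_of_sq_sub_mul_add_eq_zero htr_neg hdet_pos hz⟩

/-- The interior fixed point P = (y⋆, v⋆) is a hyperbolic sink. -/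
theorem interior_fixed_point_is_sink
    (Υ₀ Γ₀ : ℝ → ℝ) (a b : ℝ) (ha : -4 < a) (hb : 0 < b)
    (hΥ : ContDiff ℝ 1 Υ₀) (hΓ : ContDiff ℝ 1 Γ₀)
    (ystar vstar : ℝ) (hy : ystar = (a + 4) / (a + 6))
    (hv : vstar = 2 * Υ₀ ystar / (a + 6))
    (hΓpos : 0 < Γ₀ ystar) (hΥpos : 0 < Υ₀ ystar)
    (hdulac : 0 < (b * Υ₀ ystar - ystar * deriv Υ₀ ystar) * (1 - ystar)
        + ystar * Υ₀ ystar) :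
    planarF1 Υ₀ ystar vstar = 0 ∧
    planarF2 Υ₀ Γ₀ a b ystar vstar = 0 ∧
    ∀ J : Matrix (Fin 2) (Fin 2) ℝ,
      J = !![deriv (fun t => planarF1 Υ₀ t vstar) ystar,
             deriv (fun w => planarF1 Υ₀ ystar w) vstar;
             deriv (fun t => planarF2 Υ₀ Γ₀ a b t vstar) ystar,
             deriv (fun w => planarF2 Υ₀ Γ₀ a b ystar w) vstar] →
      J.det = 2 * ystar * Γ₀ ystar * Υ₀ ystar ∧ 0 < J.det ∧
      J.trace = -((b * Υ₀ ystar - ystar * deriv Υ₀ ystar) * (1 - ystar)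
          + ystar * Υ₀ ystar) ∧ J.trace < 0 ∧
      ∀ z : ℂ, z ^ 2 - (J.trace : ℂ) * z + (J.det : ℂ) = 0 → z.re < 0 :=
  interior_fixed_point_is_sink_general Υ₀ Γ₀ a b ha hΥ hΓ ystar vstar hy hv hΓpos hΥpos hdulac
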